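/- Let G be a bipartite graph with parts A and B, each of size n, and let d̄ = (∑_{v ∈ A ∪ B} d(v))/(2n) be the average degree of G. Then β(G) ≥ n/(d̄+1) − 2. -/

import Mathlib

open Finset

/-- The bi-hole number `β(G)` of a bipartite graph `G` with parts `A`, `B`: the largest `k`
such that there are `S ⊆ A`, `T ⊆ B` with `|S| = |T| = k` and no edge of `G` between
`S` and `T`. -/
noncomputable def biholeNumber {V : Type*} (G : SimpleGraph V) (A B : Finset V) : ℕ :=
  sSup {k | ∃ S T : Finset V, S ⊆ A ∧ T ⊆ B ∧ S.card = k ∧ T.card = k ∧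
    ∀ s ∈ S, ∀ t ∈ T, ¬ G.Adj s t}

/-!
Let `X` be the side whose degree sum is at most `n * d̄` (the two sums add up to `2n * d̄`) and
`t = ⌊n / (d̄ + 1)⌋`. The `t` vertices of `X` of smallest degree have degree sum at most `t * d̄`,
so they have at most `t * d̄ ≤ n - t` neighbours on the other side, which leaves `t` vertices
there with no edge to them.
-/

namespace Finset

variable {ι : Type*} [DecidableEq ι]

theorem exists_subset_card_eq_forall_le_of_mem_sdiff {α : Type*} [LinearOrder α]
    (X : Finset ι) (f : ι → α) {t : ℕ} (ht : t ≤ #X) :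
    ∃ S ⊆ X, #S = t ∧ ∀ s ∈ S, ∀ x ∈ X \ S, f s ≤ f x := by
  induction t with
  | zero => exact ⟨∅, empty_subset X, card_empty, by simp⟩
  | succ t ih =>
    obtain ⟨S, hSX, hS, hlow⟩ := ih (by omega)
    have hne : (X \ S).Nonempty := by
      rw [← card_pos, card_sdiff_of_subset hSX]
      omega
    obtain ⟨m, hm, hmin⟩ := exists_min_image (X \ S) f hne
    rw [mem_sdiff] at hm
    refine ⟨insert m S, insert_subset hm.1 hSX, by rw [card_insert_of_notMem hm.2, hS], ?_⟩
    intro s hs x hx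
    have hx' : x ∈ X \ S := sdiff_subset_sdiff le_rfl (subset_insert m S) hx
    rcases mem_insert.mp hs with rfl | hs
    · exact hmin x hx'
    · exact hlow s hs x hx'

theorem card_nsmul_sum_le_card_nsmul_sum_of_forall_le {M : Type*} [AddCommMonoid M]
    [PartialOrder M] [IsOrderedAddMonoid M] {X S : Finset ι} {f : ι → M} (hSX : S ⊆ X)
    (hlow : ∀ s ∈ S, ∀ x ∈ X \ S, f s ≤ f x) :
    #X • ∑ s ∈ S, f s ≤ #S • ∑ x ∈ X, f x := by
  have hrest : #(X \ S) • ∑ s ∈ S, f s ≤ #S • ∑ x ∈ X \ S, f x :=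
    calc #(X \ S) • ∑ s ∈ S, f s = ∑ s ∈ S, ∑ _x ∈ X \ S, f s := by
          simp only [sum_const, smul_sum]
      _ ≤ ∑ _s ∈ S, ∑ x ∈ X \ S, f x := sum_le_sum fun s hs => sum_le_sum (hlow s hs)
      _ = #S • ∑ x ∈ X \ S, f x := sum_const _
  calc #X • ∑ s ∈ S, f s = #S • ∑ s ∈ S, f s + #(X \ S) • ∑ s ∈ S, f s := by
        rw [← add_nsmul, add_comm, card_sdiff_add_card_eq_card hSX]
    _ ≤ #S • ∑ s ∈ S, f s + #S • ∑ x ∈ X \ S, f x := add_le_add_right hrest _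
    _ = #S • ∑ x ∈ X, f x := by rw [← nsmul_add, add_comm, sum_sdiff hSX]

theorem exists_subset_card_eq_card_nsmul_sum_le {M : Type*} [AddCommMonoid M] [LinearOrder M]
    [IsOrderedAddMonoid M] (X : Finset ι) (f : ι → M) {t : ℕ} (ht : t ≤ #X) :
    ∃ S ⊆ X, #S = t ∧ #X • ∑ s ∈ S, f s ≤ t • ∑ x ∈ X, f x := by
  obtain ⟨S, hSX, rfl, hlow⟩ := exists_subset_card_eq_forall_le_of_mem_sdiff X f ht
  exact ⟨S, hSX, rfl, card_nsmul_sum_le_card_nsmul_sum_of_forall_le hSX hlow⟩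

end Finset

namespace SimpleGraph

variable {V : Type*} (G : SimpleGraph V)

theorem card_le_card_filter_forall_not_adj_add_sum_degree [Fintype V] [DecidableEq V]
    [DecidableRel G.Adj] (S Y : Finset V) :
    #Y ≤ #{y ∈ Y | ∀ s ∈ S, ¬ G.Adj s y} + ∑ s ∈ S, G.degree s := by
  have hcovered : #{y ∈ Y | ¬ ∀ s ∈ S, ¬ G.Adj s y} ≤ ∑ s ∈ S, G.degree s :=
    calc #{y ∈ Y | ¬ ∀ s ∈ S, ¬ G.Adj s y}
        ≤ #(S.biUnion fun s => G.neighborFinset s) := card_le_card fun y hy => by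
          simp only [mem_filter, not_forall, not_not] at hy
          obtain ⟨-, s, hs, hadj⟩ := hy
          exact mem_biUnion.mpr ⟨s, hs, (G.mem_neighborFinset s y).mpr hadj⟩
      _ ≤ ∑ s ∈ S, #(G.neighborFinset s) := card_biUnion_le
      _ = ∑ s ∈ S, G.degree s := by simp only [card_neighborFinset_eq_degree]
  rw [← card_filter_add_card_filter_not (fun y => ∀ s ∈ S, ¬ G.Adj s y)]
  omega

theorem le_biholeNumber {A B S T : Finset V} {k : ℕ} (hSA : S ⊆ A) (hTB : T ⊆ B)
    (hS : #S = k) (hT : #T = k) (hST : ∀ s ∈ S, ∀ t ∈ T, ¬ G.Adj s t) :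
    k ≤ biholeNumber G A B := by
  refine le_csSup ⟨#A, ?_⟩ ⟨S, T, hSA, hTB, hS, hT, hST⟩
  rintro _ ⟨S', -, hS'A, -, rfl, -, -⟩
  exact card_le_card hS'A

theorem biholeNumber_comm (A B : Finset V) : biholeNumber G A B = biholeNumber G B A := by
  suffices ∀ A B : Finset V, {k | ∃ S T : Finset V, S ⊆ A ∧ T ⊆ B ∧ #S = k ∧ #T = k ∧
      ∀ s ∈ S, ∀ t ∈ T, ¬ G.Adj s t} ⊆ {k | ∃ S T : Finset V, S ⊆ B ∧ T ⊆ A ∧ #S = k ∧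
      #T = k ∧ ∀ s ∈ S, ∀ t ∈ T, ¬ G.Adj s t} from
    congrArg sSup ((this A B).antisymm (this B A))
  rintro A B k ⟨S, T, hSA, hTB, hS, hT, hST⟩
  exact ⟨T, S, hTB, hSA, hT, hS, fun t ht s hs hadj => hST s hs t ht hadj.symm⟩

theorem le_biholeNumber_of_mul_le [Fintype V] [DecidableEq V] [DecidableRel G.Adj]
    {A B : Finset V} {t : ℕ} (htA : t ≤ #A)
    (h : t * (#A + ∑ v ∈ A, G.degree v) ≤ #A * #B) : t ≤ biholeNumber G A B := by
  obtain ⟨S, hSA, rfl, hSsum⟩ :=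
    exists_subset_card_eq_card_nsmul_sum_le A (fun v => G.degree v) htA
  rw [smul_eq_mul, smul_eq_mul] at hSsum
  have hdeg : #S + ∑ s ∈ S, G.degree s ≤ #B := by
    rcases A.eq_empty_or_nonempty with rfl | hA
    · simp [subset_empty.mp hSA]
    refine Nat.le_of_mul_le_mul_left ?_ hA.card_pos
    calc #A * (#S + ∑ s ∈ S, G.degree s) ≤ #S * (#A + ∑ v ∈ A, G.degree v) := by
          rw [mul_add, mul_add, mul_comm #A]; exact Nat.add_le_add_left hSsum _
      _ ≤ #A * #B := h
  have hfree : #S ≤ #{y ∈ B | ∀ s ∈ S, ¬ G.Adj s y} := by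
    have := G.card_le_card_filter_forall_not_adj_add_sum_degree S B
    omega
  obtain ⟨T, hTB, hT⟩ := exists_subset_card_eq hfree
  refine G.le_biholeNumber hSA (hTB.trans (filter_subset _ _)) rfl hT fun s hs y hy => ?_
  exact (mem_filter.mp (hTB hy)).2 s hs

end SimpleGraph

theorem bihole_average_degree_general {V : Type*} [Fintype V] [DecidableEq V]
    (G : SimpleGraph V) [DecidableRel G.Adj] (n : ℕ) (A B : Finset V)
    (hdisj : Disjoint A B)
    (hA : A.card = n) (hB : B.card = n)
    (dbar : ℝ) (hdbar : dbar = (∑ v ∈ A ∪ B, (G.degree v : ℝ)) / (2 * n)) :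
    (n : ℝ) / (dbar + 1) - 2 ≤ (biholeNumber G A B : ℝ) := by
  rcases n.eq_zero_or_pos with rfl | hn
  · simp only [Nat.cast_zero, zero_div]
    linarith [(biholeNumber G A B).cast_nonneg (α := ℝ)]
  have hsplit : ∑ v ∈ A, (G.degree v : ℝ) + ∑ v ∈ B, (G.degree v : ℝ) = 2 * n * dbar := by
    rw [← sum_union hdisj, hdbar, mul_div_cancel₀ _ (by positivity)]
  have hdbar0 : 0 ≤ dbar := by rw [hdbar]; positivity
  set t := ⌊(n : ℝ) / (dbar + 1)⌋₊
  have ht : (t : ℝ) * (dbar + 1) ≤ n :=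
    (le_div_iff₀ (by positivity)).mp (Nat.floor_le (by positivity))
  have hside : ∀ X Y : Finset V, #X = n → #Y = n → ∑ v ∈ X, (G.degree v : ℝ) ≤ n * dbar →
      t ≤ biholeNumber G X Y := by
    intro X Y hX hY hXsum
    have htn : (t : ℝ) ≤ n := by nlinarith
    refine G.le_biholeNumber_of_mul_le (by rw [hX]; exact_mod_cast htn) ?_
    rw [hX, hY]
    exact_mod_cast (by nlinarith : (t : ℝ) * (n + ∑ v ∈ X, (G.degree v : ℝ)) ≤ n * n)
  have htβ : t ≤ biholeNumber G A B := by
    rcases le_total (∑ v ∈ A, (G.degree v : ℝ)) (∑ v ∈ B, (G.degree v : ℝ)) with h | h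
    · exact hside A B hA hB (by linarith)
    · exact G.biholeNumber_comm A B ▸ hside B A hB hA (by linarith)
  have hfloor := Nat.lt_floor_add_one ((n : ℝ) / (dbar + 1))
  have htβ' : (t : ℝ) ≤ biholeNumber G A B := by exact_mod_cast htβ
  linarith

/-- For an `n × n` bipartite graph `G` with average degree
`d̄ = (∑_{v ∈ A ∪ B} d(v)) / (2n)`, we have `β(G) ≥ n/(d̄+1) − 2`. -/
theorem bihole_average_degree {V : Type*} [Fintype V] [DecidableEq V]
    (G : SimpleGraph V) [DecidableRel G.Adj] (n : ℕ) (A B : Finset V)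
    (hdisj : Disjoint A B) (hcover : A ∪ B = Finset.univ)
    (hbip : ∀ u v, G.Adj u v → (u ∈ A ∧ v ∈ B) ∨ (u ∈ B ∧ v ∈ A))
    (hA : A.card = n) (hB : B.card = n)
    (dbar : ℝ) (hdbar : dbar = (∑ v ∈ A ∪ B, (G.degree v : ℝ)) / (2 * n)) :
    (n : ℝ) / (dbar + 1) - 2 ≤ (biholeNumber G A B : ℝ) :=
  bihole_average_degree_general G n A B hdisj hA hB dbar hdbar
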